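/- NFA-based equivalence is a congruence for join on BARs: if BARs B1 and B2 satisfy L_f(B1) = L_f(B2), then for every BAR B3, L_f(B1 ⋈ B3) = L_f(B2 ⋈ B3). -/
import Mathlib


open scoped Classical

variable {Name Data : Type}

/-- Records over name type `Name` and data type `Data`: partial functions. -/
abbrev Rcd (Name Data : Type) := Name → Option Data

/-- The domain of a record. -/
def recDom (r : Rcd Name Data) : Set Name := {n | r n ≠ none}

/-- Restriction of a record to a name set. -/
noncomputable def recRestrict (r : Rcd Name Data) (N : Set Name) : Rcd Name Data :=
  fun n => if n ∈ N then r n else none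

/-- Compatibility of records `r1 ∈ Rec_{N1}(D)` and `r2 ∈ Rec_{N2}(D)`. -/
def recComp (N1 N2 : Set Name) (r1 r2 : Rcd Name Data) : Prop :=
  recDom r1 ∩ N2 = recDom r2 ∩ N1 ∧
    ∀ n ∈ recDom r1 ∩ recDom r2, r1 n = r2 n

/-- Union of records: takes `r1`'s value on `dom r1`, else `r2`'s value. -/
def recUnion (r1 r2 : Rcd Name Data) : Rcd Name Data :=
  fun n => (r1 n).orElse (fun _ => r2 n)
/-- A labeled transition system. -/
structure LTS (Q A : Type) where
  delta : Q → A → Set Q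
  init : Set Q

variable {Q Q1 Q2 Q3 A : Type}

/-- The set of states reachable from a set of states by reading a finite string. -/
def reachSet (M : LTS Q A) : Set Q → List A → Set Q
  | S, [] => S
  | S, a :: w => reachSet M {q' | ∃ q ∈ S, q' ∈ M.delta q a} w

/-- A finite string is traceable in an LTS. -/
def finTraceable (M : LTS Q A) (w : List A) : Prop :=
  (reachSet M M.init w).Nonempty

/-- An infinite string is traceable in an LTS. -/
def infTraceable (M : LTS Q A) (w : ℕ → A) : Prop :=
  ∃ ρ : ℕ → Q, ρ 0 ∈ M.init ∧ ∀ i, ρ (i + 1) ∈ M.delta (ρ i) (w i)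

/-- A Büchi automaton. -/
structure BA (Q A : Type) where
  delta : Q → A → Set Q
  init : Set Q
  final : Set Q

def BA.toLTS (B : BA Q A) : LTS Q A := ⟨B.delta, B.init⟩

/-- The language of finite strings of a Büchi automaton regarded as an NFA. -/
def BA.Lf (B : BA Q A) (w : List A) : Prop :=
  (reachSet B.toLTS B.init w ∩ B.final).Nonempty

/-- The Büchi language of infinite strings. -/
def BA.LB (B : BA Q A) (w : ℕ → A) : Prop :=
  ∃ ρ : ℕ → Q, ρ 0 ∈ B.init ∧ (∀ i, ρ (i + 1) ∈ B.delta (ρ i) (w i)) ∧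
    ∀ n, ∃ m ≥ n, ρ m ∈ B.final

/-- An LTS of records (LTSR) over name set `N`: transitions only on records over `N`. -/
def ltsOver (M : LTS Q (Rcd Name Data)) (N : Set Name) : Prop :=
  ∀ q r, ¬ recDom r ⊆ N → M.delta q r = ∅

/-- A BAR over name set `N`: transitions only on records over `N`. -/
def baOver (B : BA Q (Rcd Name Data)) (N : Set Name) : Prop :=
  ∀ q r, ¬ recDom r ⊆ N → B.delta q r = ∅

/-- A trapless LTS: every state has an outgoing transition. -/
def trapless (M : LTS Q A) : Prop :=
  ∀ q, ∃ a, (M.delta q a).Nonempty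

/-- Pointwise restriction of a finite string of records to a name set. -/
noncomputable def strRestrict (w : List (Rcd Name Data)) (N : Set Name) :
    List (Rcd Name Data) :=
  w.map (fun r => recRestrict r N)

/-- The visible portion of a finite string: delete all invisible (empty-domain) records. -/
noncomputable def visList (w : List (Rcd Name Data)) : List (Rcd Name Data) :=
  w.filterMap (fun r => if (recDom r).Nonempty then some r else none)

/-- `vis(w↓_N)` for a finite string `w`. -/
noncomputable def visRestrict (w : List (Rcd Name Data)) (N : Set Name) :
    List (Rcd Name Data) :=
  visList (strRestrict w N)

/-- The transition function of the join: a record advances each component on its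
restriction to the component's name set when that restriction is visible, and
leaves the component unchanged otherwise. -/
noncomputable def joinDelta (N1 N2 : Set Name)
    (d1 : Q1 → Rcd Name Data → Set Q1) (d2 : Q2 → Rcd Name Data → Set Q2) :
    Q1 × Q2 → Rcd Name Data → Set (Q1 × Q2) :=
  fun p r =>
    {p' | p'.1 ∈ (if (recDom r ∩ N1).Nonempty then d1 p.1 (recRestrict r N1) else {p.1}) ∧
          p'.2 ∈ (if (recDom r ∩ N2).Nonempty then d2 p.2 (recRestrict r N2) else {p.2})}

/-- Join of two LTSRs. -/
noncomputable def joinLTS (N1 N2 : Set Name)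
    (M1 : LTS Q1 (Rcd Name Data)) (M2 : LTS Q2 (Rcd Name Data)) :
    LTS (Q1 × Q2) (Rcd Name Data) :=
  ⟨joinDelta N1 N2 M1.delta M2.delta, M1.init ×ˢ M2.init⟩

/-- The Büchi language of the join of two BARs: the generalized Büchi acceptance with
family `{F1 × Q2, Q1 × F2}`, i.e. both final-state sets occur infinitely often. -/
def joinLB (N1 N2 : Set Name)
    (B1 : BA Q1 (Rcd Name Data)) (B2 : BA Q2 (Rcd Name Data)) (w : ℕ → Rcd Name Data) : Prop :=
  ∃ ρ : ℕ → Q1 × Q2, ρ 0 ∈ B1.init ×ˢ B2.init ∧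
    (∀ i, ρ (i + 1) ∈ joinDelta N1 N2 B1.delta B2.delta (ρ i) (w i)) ∧
    (∀ n, ∃ m ≥ n, (ρ m).1 ∈ B1.final) ∧ (∀ n, ∃ m ≥ n, (ρ m).2 ∈ B2.final)

/-- The NFA language of the join of two BARs (final states `F1 × F2`). -/
noncomputable def joinLf (N1 N2 : Set Name)
    (B1 : BA Q1 (Rcd Name Data)) (B2 : BA Q2 (Rcd Name Data)) (w : List (Rcd Name Data)) : Prop :=
  (reachSet (joinLTS N1 N2 B1.toLTS B2.toLTS) (B1.init ×ˢ B2.init) w ∩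
      (B1.final ×ˢ B2.final)).Nonempty

lemma visRestrict_cons (r : Rcd Name Data) (t : List (Rcd Name Data)) (N : Set Name) :
    visRestrict (r :: t) N =
      if (recDom (recRestrict r N)).Nonempty then recRestrict r N :: visRestrict t N
      else visRestrict t N := by
  by_cases h : (recDom (recRestrict r N)).Nonempty <;>
    simp [visRestrict, strRestrict, visList, h]

lemma recDom_restrict (r : Rcd Name Data) (N : Set Name) :
    recDom (recRestrict r N) = recDom r ∩ N := by
  ext n
  simp only [recDom, recRestrict, Set.mem_setOf_eq, Set.mem_inter_iff]
  split <;> simp_all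

lemma reach_join {Q1 Q2 : Type} (N1 N2 : Set Name)
    (M1 : LTS Q1 (Rcd Name Data)) (M2 : LTS Q2 (Rcd Name Data))
    (S1 : Set Q1) (S2 : Set Q2) (w : List (Rcd Name Data)) :
    reachSet (joinLTS N1 N2 M1 M2) (S1 ×ˢ S2) w =
      (reachSet M1 S1 (visRestrict w N1)) ×ˢ (reachSet M2 S2 (visRestrict w N2)) := by
  induction w generalizing S1 S2 with
  | nil => simp [reachSet, visRestrict, strRestrict, visList]
  | cons r t ih =>
    have hstep : {q' | ∃ q ∈ S1 ×ˢ S2, q' ∈ (joinLTS N1 N2 M1 M2).delta q r} =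
        (if (recDom r ∩ N1).Nonempty then {q' | ∃ q ∈ S1, q' ∈ M1.delta q (recRestrict r N1)} else S1) ×ˢ
        (if (recDom r ∩ N2).Nonempty then {q' | ∃ q ∈ S2, q' ∈ M2.delta q (recRestrict r N2)} else S2) := by
      ext ⟨a, b⟩
      by_cases c1 : (recDom r ∩ N1).Nonempty <;> by_cases c2 : (recDom r ∩ N2).Nonempty <;>
        simp only [joinLTS, joinDelta, Set.mem_setOf_eq, Set.prodMk_mem_set_prod_eq,
          Set.mem_prod, c1, c2, if_true, if_false, Set.mem_singleton_iff] <;>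
        aesop
    show reachSet (joinLTS N1 N2 M1 M2) {q' | ∃ q ∈ S1 ×ˢ S2, q' ∈ (joinLTS N1 N2 M1 M2).delta q r} t = _
    rw [hstep, ih]
    rw [visRestrict_cons, visRestrict_cons, recDom_restrict, recDom_restrict]
    by_cases c1 : (recDom r ∩ N1).Nonempty <;> by_cases c2 : (recDom r ∩ N2).Nonempty <;>
      simp [c1, c2, reachSet]

lemma joinLf_iff {Q1 Q3 : Type} (N1 N3 : Set Name)
    (B1 : BA Q1 (Rcd Name Data)) (B3 : BA Q3 (Rcd Name Data)) (w : List (Rcd Name Data)) :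
    joinLf N1 N3 B1 B3 w ↔ B1.Lf (visRestrict w N1) ∧ B3.Lf (visRestrict w N3) := by
  unfold joinLf BA.Lf
  rw [show B1.init ×ˢ B3.init = B1.toLTS.init ×ˢ B3.toLTS.init from rfl,
    reach_join, Set.prod_inter_prod, Set.prod_nonempty_iff]
  exact Iff.rfl

/-- NFA-based equivalence is a congruence for join on BARs: if
`L_f(B1) = L_f(B2)` then for every BAR `B3`, `L_f(B1 ⋈ B3) = L_f(B2 ⋈ B3)`. -/
theorem Lf_equiv_congruence {Q1 Q2 : Type} (N : Set Name)
    (B1 : BA Q1 (Rcd Name Data)) (B2 : BA Q2 (Rcd Name Data))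
    (h1 : baOver B1 N) (h2 : baOver B2 N)
    (hf : ∀ w : List (Rcd Name Data), B1.Lf w ↔ B2.Lf w) :
    ∀ {Q3 : Type} (N3 : Set Name) (B3 : BA Q3 (Rcd Name Data)), baOver B3 N3 →
      ∀ w : List (Rcd Name Data), joinLf N N3 B1 B3 w ↔ joinLf N N3 B2 B3 w := by
  intro Q3 N3 B3 _ w
  rw [joinLf_iff, joinLf_iff, hf]
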